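/- arXiv:2210.08986 — 6 statements merged into one kernel-verified Lean document; each statement's English description precedes it below -/
import Mathlib

section
/- Let g be a Lie superalgebra over a field K of characteristic 2 with squaring s, and let α : g → g be an even Lie superalgebra morphism (preserving the bracket and the squaring). Then the quadruple (g, [·,·]_α, s_α, α), where [x,y]_α := α([x,y]) and s_α(x) := α(s(x)), is a Hom-Lie superalgebra in characteristic 2; in particular [s_α(x), α(y)]_α = [α(x), [x,y]_α]_α for all odd x and all y in g. -/
/-- A Hom-Lie superalgebra in characteristic 2 (Bouarroudj–Makhlouf, Def. 2.3),
encoded on a `K`-module `g` with even/odd parts `g0, g1`, symmetric bracket `br`,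
squaring `sq` (meaningful on `g1`), and even twist `α`.
When `α = id` this is exactly a Lie superalgebra in characteristic 2. -/
structure IsHomLieSuper2 (K g : Type*) [Field K] [AddCommGroup g] [Module K g]
    (g0 g1 : Submodule K g) (br : g →ₗ[K] g →ₗ[K] g) (sq : g → g)
    (α : g →ₗ[K] g) : Prop where
  br_symm : ∀ x y, br x y = br y x
  br_even_even : ∀ x ∈ g0, ∀ y ∈ g0, br x y ∈ g0
  br_even_odd : ∀ x ∈ g0, ∀ y ∈ g1, br x y ∈ g1
  br_odd_odd : ∀ x ∈ g1, ∀ y ∈ g1, br x y ∈ g0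
  alt_even : ∀ x ∈ g0, br x x = 0
  alpha_even : ∀ x ∈ g0, α x ∈ g0
  alpha_odd : ∀ x ∈ g1, α x ∈ g1
  sq_mem : ∀ x ∈ g1, sq x ∈ g0
  sq_smul : ∀ (c : K), ∀ x ∈ g1, sq (c • x) = (c * c) • sq x
  polar : ∀ x ∈ g1, ∀ y ∈ g1, sq (x + y) = sq x + sq y + br x y
  jacobi_even : ∀ x ∈ g0, ∀ y ∈ g0, ∀ z ∈ g0,
    br (α x) (br y z) + br (α y) (br z x) + br (α z) (br x y) = 0
  jacobi_sq : ∀ x ∈ g1, ∀ y, br (sq x) (α y) = br (α x) (br x y)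
  alpha_br : ∀ x y, α (br x y) = br (α x) (α y)
  alpha_sq : ∀ x ∈ g1, α (sq x) = sq (α x)

/-- twisting a Lie superalgebra in characteristic 2 by an even
morphism α yields a Hom-Lie superalgebra with bracket α∘[·,·] and squaring α∘s;
in particular the twisted Jacobi identity for the squaring holds. -/
theorem stmt_0 (K g : Type*) [Field K] [CharP K 2] [AddCommGroup g] [Module K g]
    (g0 g1 : Submodule K g) (br : g →ₗ[K] g →ₗ[K] g) (sq : g → g)
    (hg : IsHomLieSuper2 K g g0 g1 br sq LinearMap.id)
    (α : g →ₗ[K] g)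
    (hα0 : ∀ x ∈ g0, α x ∈ g0) (hα1 : ∀ x ∈ g1, α x ∈ g1)
    (hαbr : ∀ x y, α (br x y) = br (α x) (α y))
    (hαsq : ∀ x ∈ g1, α (sq x) = sq (α x)) :
    IsHomLieSuper2 K g g0 g1 (br.compr₂ α) (fun x => α (sq x)) α ∧
    ∀ x ∈ g1, ∀ y, (br.compr₂ α) (α (sq x)) (α y)
      = (br.compr₂ α) (α x) ((br.compr₂ α) x y) := by
  have hbr : ∀ x y, (br.compr₂ α) x y = α (br x y) := fun x y => rfl
  have key : ∀ x ∈ g1, ∀ y, (br.compr₂ α) (α (sq x)) (α y)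
      = (br.compr₂ α) (α x) ((br.compr₂ α) x y) := by
    intro x hx y
    simp only [hbr]
    congr 1
    rw [← hαbr, ← hαbr]
    congr 1
    simpa using hg.jacobi_sq x hx y
  refine ⟨⟨?_, ?_, ?_, ?_, ?_, hα0, hα1, ?_, ?_, ?_, ?_, ?_, ?_, ?_⟩, key⟩
  · intro x y; simp only [hbr, hg.br_symm x y]
  · intro x hx y hy; exact hα0 _ (hg.br_even_even x hx y hy)
  · intro x hx y hy; exact hα1 _ (hg.br_even_odd x hx y hy)
  · intro x hx y hy; exact hα0 _ (hg.br_odd_odd x hx y hy)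
  · intro x hx; simp [hbr, hg.alt_even x hx]
  · intro x hx; exact hα0 _ (hg.sq_mem x hx)
  · intro c x hx; rw [hg.sq_smul c x hx, map_smul]
  · intro x hx y hy; rw [hg.polar x hx y hy, map_add, map_add, hbr]
  · intro x hx y hy z hz
    simp only [hbr, ← hαbr, ← map_add]
    have := hg.jacobi_even x hx y hy z hz
    simp only [LinearMap.id_coe, id_eq] at this
    rw [this, map_zero, map_zero]
  · exact key
  · intro x y; simp only [hbr, hαbr]
  · intro x hx
    rw [hαsq x hx, hαsq (α x) (hα1 x hx)]
end

section
/- Let (g, [·,·]_g, s_g, α) be a Hom-Lie superalgebra in characteristic 2 and (V, [·,·]_V, β) a representation of g. Then the superspace g ⊕ V with bracket [x+v, y+w] := [x,y]_g + [x,w]_V + [y,v]_V, squaring s(x+v) := s_g(x) + [x,v]_V for x odd in g and v odd in V, and twist map (x+v) ↦ α(x) + β(v), is a Hom-Lie superalgebra in characteristic 2 (the semidirect product). -/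
/-- the semidirect product of a Hom-Lie superalgebra in
characteristic 2 with a representation (V, [·,·]_V, β) is a Hom-Lie
superalgebra on g ⊕ V. -/
theorem stmt_3 (K g V : Type*) [Field K] [CharP K 2]
    [AddCommGroup g] [Module K g] [AddCommGroup V] [Module K V]
    (g0 g1 : Submodule K g) (br : g →ₗ[K] g →ₗ[K] g) (sq : g → g)
    (α : g →ₗ[K] g)
    (hg : IsHomLieSuper2 K g g0 g1 br sq α)
    (V0 V1 : Submodule K V) (a : g →ₗ[K] V →ₗ[K] V) (β : V →ₗ[K] V)
    (hβ0 : ∀ v ∈ V0, β v ∈ V0) (hβ1 : ∀ v ∈ V1, β v ∈ V1)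
    (ha00 : ∀ x ∈ g0, ∀ v ∈ V0, a x v ∈ V0)
    (ha01 : ∀ x ∈ g0, ∀ v ∈ V1, a x v ∈ V1)
    (ha10 : ∀ x ∈ g1, ∀ v ∈ V0, a x v ∈ V1)
    (ha11 : ∀ x ∈ g1, ∀ v ∈ V1, a x v ∈ V0)
    (hrep1 : ∀ x v, a (α x) (β v) = β (a x v))
    (hrep2 : ∀ x y v, a (br x y) (β v) = a (α x) (a y v) + a (α y) (a x v))
    (hrep3 : ∀ x ∈ g1, ∀ v, a (sq x) (β v) = a (α x) (a x v))
    (B : (g × V) →ₗ[K] (g × V) →ₗ[K] (g × V))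
    (hB : ∀ p q : g × V, B p q = (br p.1 q.1, a p.1 q.2 + a q.1 p.2))
    (S : g × V → g × V)
    (hS : ∀ p : g × V, S p = (sq p.1, a p.1 p.2)) :
    IsHomLieSuper2 K (g × V) (g0.prod V0) (g1.prod V1) B S (α.prodMap β) := by
  have h2 : ∀ {W : Type _} [AddCommGroup W] [Module K W] (w : W), w + w = 0 := by
    intro W _ _ w
    rw [← two_smul K w, show ((2:K)) = 0 by exact_mod_cast CharP.cast_eq_zero K 2, zero_smul]
  constructor
  · intro p q
    rw [hB, hB]
    exact Prod.ext (hg.br_symm _ _) (add_comm _ _)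
  · rintro p ⟨hp1, hp2⟩ q ⟨hq1, hq2⟩
    rw [hB]
    exact ⟨hg.br_even_even _ hp1 _ hq1, add_mem (ha00 _ hp1 _ hq2) (ha00 _ hq1 _ hp2)⟩
  · rintro p ⟨hp1, hp2⟩ q ⟨hq1, hq2⟩
    rw [hB]
    exact ⟨hg.br_even_odd _ hp1 _ hq1, add_mem (ha01 _ hp1 _ hq2) (ha10 _ hq1 _ hp2)⟩
  · rintro p ⟨hp1, hp2⟩ q ⟨hq1, hq2⟩
    rw [hB]
    exact ⟨hg.br_odd_odd _ hp1 _ hq1, add_mem (ha11 _ hp1 _ hq2) (ha11 _ hq1 _ hp2)⟩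
  · rintro p ⟨hp1, hp2⟩
    rw [hB]
    exact Prod.ext (hg.alt_even _ hp1) (h2 _)
  · rintro p ⟨hp1, hp2⟩
    exact ⟨hg.alpha_even _ hp1, hβ0 _ hp2⟩
  · rintro p ⟨hp1, hp2⟩
    exact ⟨hg.alpha_odd _ hp1, hβ1 _ hp2⟩
  · rintro p ⟨hp1, hp2⟩
    rw [hS]
    exact ⟨hg.sq_mem _ hp1, ha11 _ hp1 _ hp2⟩
  · rintro c p ⟨hp1, hp2⟩
    rw [hS, hS]
    refine Prod.ext ?_ ?_
    · simpa using hg.sq_smul c _ hp1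
    · simp [smul_smul]
  · rintro p ⟨hp1, hp2⟩ q ⟨hq1, hq2⟩
    rw [hS, hS, hS, hB]
    refine Prod.ext ?_ ?_
    · simpa using hg.polar _ hp1 _ hq1
    · simp only [Prod.fst_add, Prod.snd_add, map_add, LinearMap.add_apply]
      abel
  · rintro p ⟨hp1, hp2⟩ q ⟨hq1, hq2⟩ r ⟨hr1, hr2⟩
    rw [hB, hB, hB, hB, hB, hB]
    refine Prod.ext ?_ ?_
    · simpa using hg.jacobi_even _ hp1 _ hq1 _ hr1
    · simp only [LinearMap.prodMap_apply, Prod.fst_add, Prod.snd_add, map_add,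
        LinearMap.add_apply, hrep2, Prod.snd_zero]
      abel_nf
      simp [two_nsmul, two_zsmul, h2]
  · rintro p ⟨hp1, hp2⟩ q
    rw [hS, hB, hB, hB]
    refine Prod.ext ?_ ?_
    · simpa using hg.jacobi_sq _ hp1 _
    · simp only [LinearMap.prodMap_apply, map_add, LinearMap.add_apply,
        hrep2, hrep3 _ hp1]
      abel_nf
      simp [two_nsmul, two_zsmul, h2]
  · intro p q
    rw [hB, hB]
    refine Prod.ext ?_ ?_
    · simpa using hg.alpha_br _ _
    · simp [hrep1]
  · rintro p ⟨hp1, hp2⟩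
    rw [hS, hS]
    refine Prod.ext ?_ ?_
    · simpa using hg.alpha_sq _ hp1
    · simp [hrep1]
end

section
/- Let (g, [·,·], s) be a Lie superalgebra in characteristic 2, ρ : g → gl(V) a representation (so ρ([x,y]) = [ρ(x),ρ(y)] and ρ(s(x)) = ρ(x)² for odd x), α : g → g an even superalgebra morphism, and β ∈ gl(V) a linear map such that ρ(α(x))∘β = β∘ρ(x) for all x. Then (V, ρ_β, β) with ρ_β := β∘ρ is a representation of the twisted Hom-Lie superalgebra (g, α∘[·,·], α∘s, α); in particular ρ_β(α∘s(x))∘β = ρ_β(α(x))∘ρ_β(x) for every odd x. -/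
/-- twisting a representation ρ of a Lie superalgebra in
characteristic 2 by β (with ρ(α x)∘β = β∘ρ(x)) yields a representation
ρ_β = β∘ρ of the twisted Hom-Lie superalgebra (g, α∘[·,·], α∘s, α). -/
theorem stmt_4 (K g V : Type*) [Field K] [CharP K 2]
    [AddCommGroup g] [Module K g] [AddCommGroup V] [Module K V]
    (g0 g1 : Submodule K g) (br : g →ₗ[K] g →ₗ[K] g) (sq : g → g)
    (hg : IsHomLieSuper2 K g g0 g1 br sq LinearMap.id)
    (ρ : g →ₗ[K] (V →ₗ[K] V))
    (hρbr : ∀ x y, ρ (br x y) = ρ x ∘ₗ ρ y + ρ y ∘ₗ ρ x)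
    (hρsq : ∀ x ∈ g1, ρ (sq x) = ρ x ∘ₗ ρ x)
    (α : g →ₗ[K] g)
    (hα0 : ∀ x ∈ g0, α x ∈ g0) (hα1 : ∀ x ∈ g1, α x ∈ g1)
    (hαbr : ∀ x y, α (br x y) = br (α x) (α y))
    (hαsq : ∀ x ∈ g1, α (sq x) = sq (α x))
    (β : V →ₗ[K] V)
    (hβ : ∀ x, ρ (α x) ∘ₗ β = β ∘ₗ ρ x) :
    (∀ x, (β ∘ₗ ρ (α x)) ∘ₗ β = β ∘ₗ (β ∘ₗ ρ x)) ∧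
    (∀ x y, (β ∘ₗ ρ (α (br x y))) ∘ₗ β
      = (β ∘ₗ ρ (α x)) ∘ₗ (β ∘ₗ ρ y) + (β ∘ₗ ρ (α y)) ∘ₗ (β ∘ₗ ρ x)) ∧
    (∀ x ∈ g1, (β ∘ₗ ρ (α (sq x))) ∘ₗ β = (β ∘ₗ ρ (α x)) ∘ₗ (β ∘ₗ ρ x)) := by
  have hβ' : ∀ x v, ρ (α x) (β v) = β (ρ x v) := fun x v => LinearMap.congr_fun (hβ x) v
  refine ⟨fun x => ?_, fun x y => ?_, fun x hx => ?_⟩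
  · ext v; simp [hβ']
  · ext v; simp [hρbr, hβ']
  · ext v; simp [hρsq x hx, hβ']
end

section
/- Let (g, [·,·]_g, s_g, α) be a Hom-Lie superalgebra in characteristic 2, V a superspace, and β ∈ GL(V) even invertible. A linear map ρ : g → gl(V) is a representation of g on V with respect to β if and only if ρ is a morphism of Hom-Lie superalgebras from (g,[·,·]_g,s_g,α) to (gl(V), [·,·]_{gl(V)}, s_{gl(V)}, Ad_β), where [f,g]_{gl(V)} := β∘f∘β⁻¹∘g∘β⁻¹ + β∘g∘β⁻¹∘f∘β⁻¹, s_{gl(V)}(f) := β∘f∘β⁻¹∘f∘β⁻¹, and Ad_β(f) := β∘f∘β⁻¹. -/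
/-- ρ : g → gl(V) is a representation with respect to β iff ρ is
a morphism of Hom-Lie superalgebras into (gl(V), [·,·]_{gl(V)}, s_{gl(V)}, Ad_β). -/
theorem stmt_6 (K g V : Type*) [Field K] [CharP K 2]
    [AddCommGroup g] [Module K g] [AddCommGroup V] [Module K V]
    (g0 g1 : Submodule K g) (br : g →ₗ[K] g →ₗ[K] g) (sq : g → g)
    (α : g →ₗ[K] g)
    (hg : IsHomLieSuper2 K g g0 g1 br sq α)
    (β : V ≃ₗ[K] V)
    (ρ : g →ₗ[K] (V →ₗ[K] V)) :
    ((∀ x, ρ (α x) ∘ₗ β.toLinearMap = β.toLinearMap ∘ₗ ρ x) ∧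
     (∀ x y, ρ (br x y) ∘ₗ β.toLinearMap = ρ (α x) ∘ₗ ρ y + ρ (α y) ∘ₗ ρ x) ∧
     (∀ x ∈ g1, ρ (sq x) ∘ₗ β.toLinearMap = ρ (α x) ∘ₗ ρ x))
    ↔
    ((∀ x y, ρ (br x y) =
        β.toLinearMap ∘ₗ ρ x ∘ₗ β.symm.toLinearMap ∘ₗ ρ y ∘ₗ β.symm.toLinearMap
        + β.toLinearMap ∘ₗ ρ y ∘ₗ β.symm.toLinearMap ∘ₗ ρ x ∘ₗ β.symm.toLinearMap) ∧
     (∀ x ∈ g1, ρ (sq x) =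
        β.toLinearMap ∘ₗ ρ x ∘ₗ β.symm.toLinearMap ∘ₗ ρ x ∘ₗ β.symm.toLinearMap) ∧
     (∀ x, ρ (α x) = β.toLinearMap ∘ₗ ρ x ∘ₗ β.symm.toLinearMap)) :=
  by
  have key : ∀ (A B : V →ₗ[K] V), A ∘ₗ β.toLinearMap = B ↔ A = B ∘ₗ β.symm.toLinearMap := by
    intro A B
    constructor
    · intro h; ext v
      have := congrArg (fun f => f (β.symm v)) h
      simpa using this
    · intro h; ext v
      have := congrArg (fun f => f (β v)) h
      simpa using this
  constructor
  · rintro ⟨h1, h2, h3⟩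
    have hα : ∀ x, ρ (α x) = β.toLinearMap ∘ₗ ρ x ∘ₗ β.symm.toLinearMap := by
      intro x
      rw [(key _ _).1 (h1 x)]; ext v; simp
    refine ⟨?_, ?_, fun x => hα x⟩
    · intro x y
      rw [(key _ _).1 (h2 x y), hα x, hα y]; ext v; simp
    · intro x hx
      rw [(key _ _).1 (h3 x hx), hα x]; ext v; simp
  · rintro ⟨h2, h3, h1⟩
    refine ⟨?_, ?_, ?_⟩
    · intro x; rw [key, h1 x]; ext v; simp
    · intro x y; rw [key, h2 x y, h1 x, h1 y]; ext v; simp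
    · intro x hx; rw [key, h3 x hx, h1 x]; ext v; simp
end

section
/- Let g be an ordinary restricted Lie algebra over a field K of characteristic 2 with 2-structure x ↦ x^{[2]} (satisfying [x^{[2]},y] = [x,[x,y]], (λx)^{[2]} = λ²x^{[2]}, and (x+y)^{[2]} = x^{[2]} + y^{[2]} + [x,y]), and let α : g → g be a Lie algebra morphism. Then the twisted Hom-Lie algebra (g, α∘[·,·], α) is restricted with 2-structure x^{[2]_α} := α(x^{[2]}); that is: [x^{[2]_α}, α(y)]_α = [α(x), [x,y]_α]_α, (λx)^{[2]_α} = λ²x^{[2]_α}, and (x+y)^{[2]_α} = x^{[2]_α} + y^{[2]_α} + [x,y]_α. -/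
/-- twisting a restricted Lie algebra in characteristic 2 by a
morphism α gives a restricted Hom-Lie algebra with 2-structure α(x^{[2]}). -/
theorem stmt_10 (K g : Type*) [Field K] [CharP K 2] [AddCommGroup g] [Module K g]
    (br : g →ₗ[K] g →ₗ[K] g) (sq : g → g)
    (halt : ∀ x, br x x = 0)
    (hjac : ∀ x y z, br x (br y z) + br y (br z x) + br z (br x y) = 0)
    (hres1 : ∀ x y, br (sq x) y = br x (br x y))
    (hres2 : ∀ (c : K) (x : g), sq (c • x) = (c * c) • sq x)
    (hres3 : ∀ x y, sq (x + y) = sq x + sq y + br x y)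
    (α : g →ₗ[K] g)
    (hαbr : ∀ x y, α (br x y) = br (α x) (α y)) :
    (∀ x y, α (br (α (sq x)) (α y)) = α (br (α x) (α (br x y)))) ∧
    (∀ (c : K) (x : g), α (sq (c • x)) = (c * c) • α (sq x)) ∧
    (∀ x y, α (sq (x + y)) = α (sq x) + α (sq y) + α (br x y)) := by
  refine ⟨fun x y => ?_, fun c x => by rw [hres2, map_smul], fun x y => by rw [hres3, map_add, map_add]⟩
  rw [← hαbr, ← hαbr, hres1]
end

section
/- Let (g, [·,·], s, α) be a Hom-Lie superalgebra in characteristic 2 and let (c, p) and (c̃, p̃) be infinitesimal deformations of g (pairs of even 2-cochains defining brackets [·,·] + t·c and squarings s + t·p mod t²). If they are equivalent via τ = id + t·τ₁ (mod t²), i.e. τ intertwines the deformed structures mod t², then c̃₁(x,y) = c₁(x,y) + τ₁([x,y]) + [x,τ₁(y)] + [y,τ₁(x)] for all x,y ∈ g, and p̃₁(x) = p₁(x) + τ₁(s(x)) + [x,τ₁(x)] for all odd x; hence (c̃₁,p̃₁) and (c₁,p₁) differ by the coboundary d¹_α τ₁, i.e. they lie in the same cohomology class. -/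
/-- two equivalent infinitesimal deformations (c₁,p₁) and
(c̃₁,p̃₁), linked by τ = id + tτ₁ mod t², differ by the coboundary d¹τ₁;
in particular c̃₁(x,y) = c₁(x,y) + τ₁([x,y]) + [x,τ₁(y)] + [y,τ₁(x)] and
p̃₁(x) = p₁(x) + τ₁(s(x)) + [x,τ₁(x)] for odd x. -/
theorem stmt_17 (K g : Type*) [Field K] [CharP K 2] [AddCommGroup g] [Module K g]
    (g0 g1 : Submodule K g) (br : g →ₗ[K] g →ₗ[K] g) (sq : g → g)
    (α : g →ₗ[K] g)
    (hg : IsHomLieSuper2 K g g0 g1 br sq α)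
    (c1 c1' : g →ₗ[K] g →ₗ[K] g) (p1 p1' : g → g)
    (hc1symm : ∀ x y, c1 x y = c1 y x)
    (hc1'symm : ∀ x y, c1' x y = c1' y x)
    (hp1smul : ∀ (t : K), ∀ x ∈ g1, p1 (t • x) = (t * t) • p1 x)
    (hp1'smul : ∀ (t : K), ∀ x ∈ g1, p1' (t • x) = (t * t) • p1' x)
    (hPol : ∀ x ∈ g1, ∀ y ∈ g1, p1 (x + y) + p1 x + p1 y = c1 x y)
    (hPol' : ∀ x ∈ g1, ∀ y ∈ g1, p1' (x + y) + p1' x + p1' y = c1' x y)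
    (τ1 : g →ₗ[K] g)
    -- t-coefficient of τ([x,y]_t) = [τ(x),τ(y)]~_t :
    (hEqBr : ∀ x y : g, τ1 (br x y) + c1 x y = c1' x y + br (τ1 x) y + br x (τ1 y))
    -- t-coefficient of τ(s_t(x)) = s̃_t(τ(x)) :
    (hEqSq : ∀ x ∈ g1, τ1 (sq x) + p1 x = p1' x + br x (τ1 x)) :
    (∀ x y : g, c1' x y = c1 x y + τ1 (br x y) + br x (τ1 y) + br y (τ1 x)) ∧
    (∀ x ∈ g1, p1' x = p1 x + τ1 (sq x) + br x (τ1 x)) := by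
  have two : ∀ a : g, a + a = 0 := by
    intro a
    have h2 : (2 : K) • a = 0 := by
      rw [show (2 : K) = 0 from CharP.cast_eq_zero K 2, zero_smul]
    rw [two_smul] at h2
    exact h2
  constructor
  · intro x y
    have h := hEqBr x y
    rw [hg.br_symm (τ1 x) y] at h
    calc c1' x y
        = c1' x y + (br y (τ1 x) + br y (τ1 x)) + (br x (τ1 y) + br x (τ1 y)) := by
          rw [two, two]; abel
      _ = (c1' x y + br y (τ1 x) + br x (τ1 y)) + (br y (τ1 x) + br x (τ1 y)) := by abel
      _ = (τ1 (br x y) + c1 x y) + (br y (τ1 x) + br x (τ1 y)) := by rw [← h]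
      _ = c1 x y + τ1 (br x y) + br x (τ1 y) + br y (τ1 x) := by abel
  · intro x hx
    have h := hEqSq x hx
    calc p1' x
        = p1' x + (br x (τ1 x) + br x (τ1 x)) := by rw [two]; abel
      _ = (p1' x + br x (τ1 x)) + br x (τ1 x) := by abel
      _ = (τ1 (sq x) + p1 x) + br x (τ1 x) := by rw [← h]
      _ = p1 x + τ1 (sq x) + br x (τ1 x) := by abel
end
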